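/- arXiv:1210.0444 — 5 statements merged into one kernel-verified Lean document; each statement's English description precedes it below -/
import Mathlib

section
/- The evolution map on binary strings of length n (replacing every occurrence of the substring "01" by "10" simultaneously) applied at most n-1 times to any string in {0,1}^n yields a stable string, i.e., a string of the form 1^k 0^(n-k) containing no occurrence of "01". -/
open Finset

/-- The k-th bit of a string of length `n`, padded with `false` out of range. -/
def bit (n : ℕ) (ω : Fin n → Bool) (k : ℕ) : Bool :=
  if h : k < n then ω ⟨k, h⟩ else false

/-- One step of the evolution: every occurrence of "01" is replaced by "10"
(simultaneously).  `E(ω)_i = 1` iff `(ω_i = 1 ∧ ¬(i ≥ 2 ∧ ω_{i-1} = 0)) ∨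
(ω_i = 0 ∧ i < n ∧ ω_{i+1} = 1)` (1-indexed; here 0-indexed). -/
def evolve (n : ℕ) (ω : Fin n → Bool) : Fin n → Bool :=
  fun i =>
    (bit n ω i.val && !(decide (0 < i.val) && !bit n ω (i.val - 1)))
      || (!bit n ω i.val && bit n ω (i.val + 1))

/-- A string is stable iff it contains no occurrence of "01". -/
def IsStable (n : ℕ) (ω : Fin n → Bool) : Prop :=
  ∀ k : ℕ, ¬(bit n ω k = false ∧ bit n ω (k + 1) = true)

/-- The stabilization time: the least number of applications of `evolve`
after which the string is stable. -/
noncomputable def stabTime (n : ℕ) (ω : Fin n → Bool) : ℕ :=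
  sInf {m : ℕ | IsStable n ((evolve n)^[m] ω)}

/-! ### Auxiliary definitions and lemmas -/

lemma bit_of_ge {n : ℕ} (σ : Fin n → Bool) {k : ℕ} (h : n ≤ k) :
    bit n σ k = false := by
  simp [bit, Nat.not_lt.mpr h]

lemma bit_evolve (n : ℕ) (σ : Fin n → Bool) (k : ℕ) :
    bit n (evolve n σ) k =
      ((bit n σ k && !(decide (0 < k) && !bit n σ (k - 1)))
        || (!bit n σ k && bit n σ (k + 1))) := by
  by_cases h : k < n
  · simp [bit, h, evolve]
  · have h1 : bit n σ k = false := bit_of_ge σ (Nat.le_of_not_lt h)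
    have h2 : bit n σ (k + 1) = false := bit_of_ge σ (by omega)
    rw [bit_of_ge _ (Nat.le_of_not_lt h), h1, h2]
    simp

/-- Number of ones among positions `0..x`. -/
def Nc (n : ℕ) (σ : Fin n → Bool) (x : ℕ) : ℕ :=
  ∑ i ∈ Finset.range (x + 1), (bit n σ i).toNat

/-- Indicator of an occurrence of "01" at positions `(x, x+1)`. -/
def pat (n : ℕ) (σ : Fin n → Bool) (x : ℕ) : ℕ :=
  if bit n σ x = false ∧ bit n σ (x + 1) = true then 1 else 0

lemma Nc_succ (n : ℕ) (σ : Fin n → Bool) (x : ℕ) :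
    Nc n σ (x + 1) = Nc n σ x + (bit n σ (x + 1)).toNat :=
  Finset.sum_range_succ _ _

lemma Nc_zero (n : ℕ) (σ : Fin n → Bool) :
    Nc n σ 0 = (bit n σ 0).toNat := by
  simp [Nc]

lemma Nc_mono (n : ℕ) (σ : Fin n → Bool) {x y : ℕ} (h : x ≤ y) :
    Nc n σ x ≤ Nc n σ y := by
  induction y, h using Nat.le_induction with
  | base => exact le_rfl
  | succ y hy ih => rw [Nc_succ]; omega

lemma Nc_le (n : ℕ) (σ : Fin n → Bool) (x : ℕ) :
    Nc n σ x ≤ x + 1 := by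
  induction x with
  | zero => rw [Nc_zero]; cases bit n σ 0 <;> simp
  | succ x ih =>
    rw [Nc_succ]
    have : (bit n σ (x + 1)).toNat ≤ 1 := by cases bit n σ (x + 1) <;> simp
    omega

lemma Nc_succ_le (n : ℕ) (σ : Fin n → Bool) (x : ℕ) :
    Nc n σ (x + 1) ≤ Nc n σ x + 1 := by
  rw [Nc_succ]
  have : (bit n σ (x + 1)).toNat ≤ 1 := by cases bit n σ (x + 1) <;> simp
  omega

/-- The key one-step counting identity: the number of ones in the prefix
`0..x` increases by exactly one when there is an occurrence of "01" at
`(x, x+1)`, and is unchanged otherwise. -/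
lemma Nc_evolve (n : ℕ) (σ : Fin n → Bool) (x : ℕ) :
    Nc n (evolve n σ) x = Nc n σ x + pat n σ x := by
  induction x with
  | zero =>
    rw [Nc_zero, Nc_zero, bit_evolve]
    cases h0 : bit n σ 0 <;> cases h1 : bit n σ 1 <;>
      simp [pat, h0, h1]
  | succ x ih =>
    rw [Nc_succ, Nc_succ, ih, bit_evolve]
    have hsub : x + 1 - 1 = x := by omega
    have hd : decide (0 < x + 1) = true := by simp
    rw [hsub, hd]
    cases h0 : bit n σ x <;> cases h1 : bit n σ (x + 1) <;>
      cases h2 : bit n σ (x + 2) <;>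
      simp [pat, h0, h1, h2]

lemma Nc_const (n : ℕ) (σ : Fin n → Bool) {x y : ℕ} (hn : n ≤ x + 1)
    (h : x ≤ y) : Nc n σ y = Nc n σ x := by
  induction y, h using Nat.le_induction with
  | base => rfl
  | succ y hy ih =>
    rw [Nc_succ, ih, bit_of_ge σ (by omega)]
    simp

lemma Nc_iterate_top (n : ℕ) (σ : Fin n → Bool) {x : ℕ} (hn : n ≤ x + 1)
    (t : ℕ) : Nc n ((evolve n)^[t] σ) x = Nc n σ x := by
  induction t with
  | zero => rfl
  | succ t ih =>
    rw [Function.iterate_succ_apply', Nc_evolve, ih]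
    have : pat n ((evolve n)^[t] σ) x = 0 := by
      unfold pat
      rw [bit_of_ge _ (by omega : n ≤ x + 1)]
      simp
    omega

/-- The main invariant: if the initial string has at least `j` ones among
positions `0 .. x+t+1-j`, then after `t` steps there are at least `j` ones
among positions `0 .. x`. -/
lemma inv_main (n : ℕ) (ω : Fin n → Bool) :
    ∀ t x j : ℕ, j ≤ x + 1 → j ≤ Nc n ω (x + t + 1 - j) →
      j ≤ Nc n ((evolve n)^[t] ω) x := by
  intro t
  induction t with
  | zero =>
    intro x j hj h2
    rcases Nat.eq_zero_or_pos j with hj0 | hj0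
    · omega
    · calc j ≤ Nc n ω (x + 0 + 1 - j) := h2
        _ ≤ Nc n ω x := Nc_mono n ω (by omega)
  | succ t ih =>
    intro x j hj h2
    rcases Nat.eq_zero_or_pos j with hj0 | hj0
    · omega
    rw [Function.iterate_succ_apply']
    set σ := (evolve n)^[t] ω with hσ
    have key : Nc n (evolve n σ) x = Nc n σ x + pat n σ x := Nc_evolve n σ x
    cases hb : bit n σ x
    · -- bit at x is false: ones in prefix x after step = ones in prefix x+1 before
      have hpat : pat n σ x = (bit n σ (x + 1)).toNat := by
        unfold pat
        rw [hb]
        cases bit n σ (x + 1) <;> simp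
      have hNx : Nc n (evolve n σ) x = Nc n σ (x + 1) := by
        rw [key, hpat, Nc_succ]
      rw [hNx]
      apply ih (x + 1) j (by omega)
      have : x + 1 + t + 1 - j = x + (t + 1) + 1 - j := by omega
      rw [this]
      exact h2
    · -- bit at x is true
      have hone : (bit n σ x).toNat = 1 := by simp [hb]
      have hmono : Nc n σ x ≤ Nc n (evolve n σ) x := by
        rw [key]; omega
      rcases x with _ | x'
      · -- x = 0 : then j ≤ 1 = Nc σ 0
        have : Nc n σ 0 = 1 := by rw [Nc_zero, hb]; rfl
        omega
      · -- x = x' + 1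
        obtain ⟨j', rfl⟩ : ∃ j', j = j' + 1 := ⟨j - 1, by omega⟩
        have hstep : Nc n σ (x' + 1) = Nc n σ x' + 1 := by
          rw [Nc_succ, hb]; rfl
        have hprev : j' ≤ Nc n σ x' := by
          apply ih x' j' (by omega)
          have hz : x' + 1 + (t + 1) + 1 - (j' + 1) = (x' + t + 1 - j') + 1 := by
            omega
          rw [hz] at h2
          have := Nc_succ_le n ω (x' + t + 1 - j')
          omega
        omega

/-- Applying the evolution at most `n - 1` times to any string in `{0,1}^n`
yields a stable string. -/
theorem stmt0 (n : ℕ) (ω : Fin n → Bool) :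
    IsStable n ((evolve n)^[n - 1] ω) := by
  rcases Nat.eq_zero_or_pos n with hn0 | hn0
  · subst hn0
    intro k ⟨h1, h2⟩
    rw [bit_of_ge _ (Nat.zero_le _)] at h2
    exact Bool.false_ne_true h2
  set σ := (evolve n)^[n - 1] ω with hσ
  set m := Nc n ω (n - 1) with hm
  have hcons : Nc n σ (n - 1) = m := Nc_iterate_top n ω (by omega) (n - 1)
  rcases Nat.eq_zero_or_pos m with hm0 | hm0
  · -- no ones at all
    intro k ⟨h1, h2⟩
    have hk1 : k + 1 < n := by
      by_contra h
      rw [bit_of_ge _ (by omega)] at h2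
      exact Bool.false_ne_true h2
    have : (bit n σ (k + 1)).toNat ≤ Nc n σ (n - 1) := by
      calc (bit n σ (k + 1)).toNat ≤ Nc n σ (k + 1) := by
            rw [Nc_succ]; omega
        _ ≤ Nc n σ (n - 1) := Nc_mono n σ (by omega)
    rw [h2] at this
    simp at this
    omega
  · -- m ≥ 1 : prefix of length m is all ones
    have hmn : m ≤ n := by
      have := Nc_le n ω (n - 1)
      omega
    have hfull : m ≤ Nc n σ (m - 1) := by
      apply inv_main n ω (n - 1) (m - 1) m (by omega)
      have : m - 1 + (n - 1) + 1 - m = n - 1 := by omega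
      rw [this]
    have hfull' : Nc n σ (m - 1) = m := by
      have := Nc_le n σ (m - 1)
      omega
    -- every bit in the prefix 0..m-1 is one
    have hprefix : ∀ i, i < m → bit n σ i = true := by
      intro i hi
      by_contra hfalse
      have hfalse' : bit n σ i = false := by
        cases h : bit n σ i
        · rfl
        · exact absurd h hfalse
      have hlt : Nc n σ (m - 1) < m := by
        have hm1 : m - 1 + 1 = m := by omega
        have hsum : Nc n σ (m - 1) = ∑ k ∈ Finset.range m, (bit n σ k).toNat := by
          unfold Nc
          rw [hm1]
        rw [hsum]
        calc ∑ k ∈ Finset.range m, (bit n σ k).toNat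
            < ∑ _k ∈ Finset.range m, 1 := by
              apply Finset.sum_lt_sum
              · intro k _
                cases bit n σ k <;> simp
              · exact ⟨i, Finset.mem_range.mpr hi, by rw [hfalse']; simp⟩
          _ = m := by simp
      omega
    intro k ⟨h1, h2⟩
    have hk1 : k + 1 < n := by
      by_contra h
      rw [bit_of_ge _ (by omega)] at h2
      exact Bool.false_ne_true h2
    have hkm : m ≤ k := by
      by_contra h
      have := hprefix k (by omega)
      rw [h1] at this
      exact Bool.false_ne_true this
    have h3 : Nc n σ (k + 1) = Nc n σ k + 1 := by
      rw [Nc_succ, h2]; rfl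
    have h4 : m ≤ Nc n σ k := by
      calc m = Nc n σ (m - 1) := hfull'.symm
        _ ≤ Nc n σ k := Nc_mono n σ (by omega)
    have h5 : Nc n σ (k + 1) ≤ m := by
      calc Nc n σ (k + 1) ≤ Nc n σ (n - 1) := Nc_mono n σ (by omega)
        _ = m := hcons
    omega
end

section
/- For any nonempty Young diagram Y, Depth(K(Y)) = Depth(Y) − 1, where Depth(Y) = max{ i + j − 1 : (i,j) ∈ Y } and Depth(∅) = 0, and K is the corner-cutting map removing all exposed corners. -/
open Finset

/-- A Young diagram: a finite down-closed set of cells in ℕ≥1 × ℕ≥1. -/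
def IsYoungDiagram (Y : Finset (ℕ × ℕ)) : Prop :=
  (∀ c ∈ Y, 1 ≤ c.1 ∧ 1 ≤ c.2) ∧
    ∀ c ∈ Y, ∀ i j : ℕ, 1 ≤ i → 1 ≤ j → i ≤ c.1 → j ≤ c.2 → (i, j) ∈ Y

/-- The corner-cutting map: remove all exposed corners, i.e. cells `(i,j)` with
`(i+1,j) ∉ Y` and `(i,j+1) ∉ Y`. -/
def cutCorners (Y : Finset (ℕ × ℕ)) : Finset (ℕ × ℕ) :=
  Y.filter fun c => (c.1 + 1, c.2) ∈ Y ∨ (c.1, c.2 + 1) ∈ Y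

/-- Depth of a Young diagram: `max {i + j - 1 : (i,j) ∈ Y}`, with `depth ∅ = 0`. -/
def depth (Y : Finset (ℕ × ℕ)) : ℕ := Y.sup fun c => c.1 + c.2 - 1

/-- Number of zeros among the first `m` bits of `ω`. -/
def zerosBefore (n : ℕ) (ω : Fin n → Bool) (m : ℕ) : ℕ :=
  (Finset.univ.filter fun l : Fin n => l.val < m ∧ ω l = false).card

/-- Number of ones among the bits of `ω` from position `m` (0-indexed) on. -/
def onesFrom (n : ℕ) (ω : Fin n → Bool) (m : ℕ) : ℕ :=
  (Finset.univ.filter fun l : Fin n => m ≤ l.val ∧ ω l = true).card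

open Classical in
/-- The Young diagram associated to a binary string: the cells below the
monotone lattice path reading ω left to right (0 = right step, 1 = down step).
`(i,j) ∈ Y(ω)` iff there is a cut point `m` with at least `i` zeros among the
first `m` bits and at least `j` ones among the remaining bits. -/
noncomputable def diag (n : ℕ) (ω : Fin n → Bool) : Finset (ℕ × ℕ) :=
  (Finset.Icc 1 n ×ˢ Finset.Icc 1 n).filter fun c =>
    1 ≤ c.1 ∧ 1 ≤ c.2 ∧ ∃ m ≤ n, c.1 ≤ zerosBefore n ω m ∧ c.2 ≤ onesFrom n ω m

theorem le_depth {Y : Finset (ℕ × ℕ)} {c : ℕ × ℕ} (hc : c ∈ Y) : c.1 + c.2 - 1 ≤ depth Y :=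
  Finset.le_sup (f := fun c : ℕ × ℕ => c.1 + c.2 - 1) hc

theorem depth_cutCorners_le (Y : Finset (ℕ × ℕ)) : depth (cutCorners Y) ≤ depth Y - 1 := by
  refine Finset.sup_le fun c hc => ?_
  rcases (Finset.mem_filter.1 hc).2 with hright | hup
  · have := le_depth hright
    omega
  · have := le_depth hup
    omega

namespace IsYoungDiagram

variable {Y : Finset (ℕ × ℕ)} {c : ℕ × ℕ}

theorem pred_fst_mem_cutCorners (hY : IsYoungDiagram Y) (hc : c ∈ Y) (h : 2 ≤ c.1) :
    (c.1 - 1, c.2) ∈ cutCorners Y := by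
  refine Finset.mem_filter.2 ⟨hY.2 c hc _ _ (by omega) (hY.1 c hc).2 (by omega) le_rfl, Or.inl ?_⟩
  rwa [Nat.sub_add_cancel (by omega : 1 ≤ c.1)]

theorem pred_snd_mem_cutCorners (hY : IsYoungDiagram Y) (hc : c ∈ Y) (h : 2 ≤ c.2) :
    (c.1, c.2 - 1) ∈ cutCorners Y := by
  refine Finset.mem_filter.2 ⟨hY.2 c hc _ _ (hY.1 c hc).1 (by omega) le_rfl (by omega), Or.inr ?_⟩
  rwa [Nat.sub_add_cancel (by omega : 1 ≤ c.2)]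

/-- Every cell of `Y` other than `(1, 1)` has a neighbour of the previous diagonal in `cutCorners Y`. -/
theorem depth_sub_one_le_depth_cutCorners (hY : IsYoungDiagram Y) :
    depth Y - 1 ≤ depth (cutCorners Y) := by
  refine Nat.sub_le_iff_le_add.2 (Finset.sup_le fun c hc => ?_)
  by_cases h1 : 2 ≤ c.1
  · have := le_depth (hY.pred_fst_mem_cutCorners hc h1)
    omega
  by_cases h2 : 2 ≤ c.2
  · have := le_depth (hY.pred_snd_mem_cutCorners hc h2)
    omega
  omega

end IsYoungDiagram

theorem stmt4_general (Y : Finset (ℕ × ℕ)) (hY : IsYoungDiagram Y) :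
    depth (cutCorners Y) = depth Y - 1 :=
  (depth_cutCorners_le Y).antisymm hY.depth_sub_one_le_depth_cutCorners

/-- For a nonempty Young diagram, cutting corners decreases the depth by 1. -/
theorem stmt4 (Y : Finset (ℕ × ℕ)) (hY : IsYoungDiagram Y) (hne : Y.Nonempty) :
    depth (cutCorners Y) = depth Y - 1 :=
  stmt4_general Y hY
end

section
/- For ω ∈ {0,1}^n with ω_1 = 0 and ω_n = 1, with S_k = Σ_{i=1}^k (1−2ω_i) and U the number of 1's in ω, we have Depth(Y(ω)) = U + max_{0 ≤ k ≤ n} S_k − 1. -/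
/-! Cutting ω after its first `m` letters gives the cell `(Z_m, O_m)` = (zeros before the cut,
ones after it), and `Y(ω)` consists of the cells dominated by these cut cells. Since
`Z_m + O_m = U + S_m`, the depth is `U + max S_m - 1` as soon as a maximising cut cell is a genuine
cell, i.e. has both coordinates positive. That is what `ω_1 = 0` and `ω_n = 1` ensure: they make
`S` rise at the start and fall at the end, so it is maximised strictly inside `(0, n)`. -/

open Finset

/-- The ±1 walk associated with a string: `S_k = Σ_{i=1}^k (1 - 2 ω_i)`. -/
def walk (n : ℕ) (ω : Fin n → Bool) (k : ℕ) : ℤ :=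
  ∑ i ∈ Finset.range k, (1 - 2 * (if bit n ω i then 1 else 0) : ℤ)

lemma card_filter_eq_sum_range_bit (n : ℕ) (ω : Fin n → Bool) (P : ℕ → Bool → Prop)
    [∀ i b, Decidable (P i b)] :
    ((univ.filter fun l : Fin n => P l (ω l)).card : ℤ) =
      ∑ i ∈ range n, if P i (bit n ω i) then 1 else 0 := by
  rw [card_filter, ← Fin.sum_univ_eq_sum_range (fun i => if P i (bit n ω i) then (1 : ℤ) else 0)]
  push_cast
  simp [bit]

lemma zerosBefore_add_onesFrom (n : ℕ) (ω : Fin n → Bool) {m : ℕ} (hm : m ≤ n) :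
    (zerosBefore n ω m : ℤ) + onesFrom n ω m =
      ((univ.filter fun l : Fin n => ω l = true).card : ℤ) + walk n ω m := by
  rw [zerosBefore, onesFrom, card_filter_eq_sum_range_bit n ω (fun i b => i < m ∧ b = false),
    card_filter_eq_sum_range_bit n ω (fun i b => m ≤ i ∧ b = true),
    card_filter_eq_sum_range_bit n ω (fun _ b => b = true), walk, ← sum_add_distrib,
    ← sum_range_add_sum_Ico _ hm, ← sum_range_add_sum_Ico _ hm]
  have before : ∀ i ∈ range m,
      ((if i < m ∧ bit n ω i = false then 1 else 0) + if m ≤ i ∧ bit n ω i = true then 1 else 0) =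
        (if bit n ω i = true then 1 else 0) + (1 - 2 * if bit n ω i = true then 1 else 0 : ℤ) := by
    intro i hi
    rw [mem_range] at hi
    cases bit n ω i <;> simp [hi, Nat.not_le.mpr hi]
  have after : ∀ i ∈ Ico m n,
      ((if i < m ∧ bit n ω i = false then 1 else 0) + if m ≤ i ∧ bit n ω i = true then 1 else 0) =
        (if bit n ω i = true then 1 else 0 : ℤ) := by
    intro i hi
    rw [mem_Ico] at hi
    cases bit n ω i <;> simp [hi.1, Nat.not_lt.mpr hi.1]
  rw [sum_congr rfl before, sum_congr rfl after, sum_add_distrib]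
  ring

lemma walk_succ (n : ℕ) (ω : Fin n → Bool) {m : ℕ} (hm : m < n) :
    walk n ω (m + 1) = walk n ω m + if ω ⟨m, hm⟩ then -1 else 1 := by
  rw [walk, sum_range_succ, ← walk, bit, dif_pos hm]
  cases ω ⟨m, hm⟩ <;> simp

lemma le_depth_diag (n : ℕ) (ω : Fin n → Bool) {m : ℕ} (hm : m ≤ n)
    (hz : 0 < zerosBefore n ω m) (ho : 0 < onesFrom n ω m) :
    zerosBefore n ω m + onesFrom n ω m - 1 ≤ depth (diag n ω) := by
  have hz' : zerosBefore n ω m ≤ n := (card_filter_le _ _).trans_eq (card_fin n)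
  have ho' : onesFrom n ω m ≤ n := (card_filter_le _ _).trans_eq (card_fin n)
  have hmem : (zerosBefore n ω m, onesFrom n ω m) ∈ diag n ω := by
    simp only [_root_.diag, mem_filter, mem_product, mem_Icc]
    exact ⟨⟨⟨hz, hz'⟩, ho, ho'⟩, hz, ho, m, hm, le_rfl, le_rfl⟩
  exact le_sup (f := fun c : ℕ × ℕ => c.1 + c.2 - 1) hmem

lemma depth_diag_le (n : ℕ) (ω : Fin n → Bool) {N : ℕ}
    (h : ∀ m ≤ n, zerosBefore n ω m + onesFrom n ω m ≤ N + 1) : depth (diag n ω) ≤ N := by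
  refine Finset.sup_le fun c hc => ?_
  simp only [_root_.diag, mem_filter] at hc
  obtain ⟨-, -, -, m, hm, hc₁, hc₂⟩ := hc
  have := h m hm
  omega

lemma exists_pos_lt_walk_eq_sup' (n : ℕ) (hn : 0 < n) (ω : Fin n → Bool)
    (h0 : ω ⟨0, hn⟩ = false) (h1 : ω ⟨n - 1, Nat.sub_lt hn one_pos⟩ = true) :
    ∃ k, 0 < k ∧ k < n ∧
      (Icc 0 n).sup' (nonempty_Icc.mpr (Nat.zero_le n)) (walk n ω) = walk n ω k := by
  obtain ⟨k, hk, hmax⟩ := exists_mem_eq_sup' (nonempty_Icc.mpr (Nat.zero_le n)) (walk n ω)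
  have hle : ∀ m ≤ n, walk n ω m ≤ walk n ω k := fun m hm =>
    hmax ▸ le_sup' (walk n ω) (mem_Icc.mpr ⟨m.zero_le, hm⟩)
  have hrise : walk n ω 0 < walk n ω 1 := by
    rw [show 1 = 0 + 1 from rfl, walk_succ n ω hn, h0]
    simp
  have hfall : walk n ω n < walk n ω (n - 1) := by
    have := walk_succ n ω (Nat.sub_lt hn one_pos)
    rw [h1, if_pos rfl, Nat.sub_add_cancel (show 1 ≤ n from hn)] at this
    omega
  refine ⟨k, Nat.pos_of_ne_zero ?_, lt_of_le_of_ne (mem_Icc.mp hk).2 ?_, hmax⟩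
  · rintro rfl
    exact hrise.not_ge (hle 1 hn)
  · intro hkn
    exact hfall.not_ge (hkn ▸ hle (n - 1) (Nat.sub_le n 1))

/-- For a string starting with 0 and ending with 1,
`Depth(Y(ω)) = U + max_{0 ≤ k ≤ n} S_k - 1` where `U` is the number of 1's. -/
theorem stmt7 (n : ℕ) (hn : 0 < n) (ω : Fin n → Bool)
    (h0 : ω ⟨0, hn⟩ = false) (h1 : ω ⟨n - 1, Nat.sub_lt hn one_pos⟩ = true) :
    (depth (diag n ω) : ℤ) =
      ((Finset.univ.filter fun l : Fin n => ω l = true).card : ℤ)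
        + (Finset.Icc 0 n).sup' (Finset.nonempty_Icc.mpr (Nat.zero_le n)) (walk n ω)
        - 1 := by
  obtain ⟨k, hk0, hkn, hmax⟩ := exists_pos_lt_walk_eq_sup' n hn ω h0 h1
  have hz : 0 < zerosBefore n ω k :=
    card_pos.mpr ⟨⟨0, hn⟩, mem_filter.mpr ⟨mem_univ _, hk0, h0⟩⟩
  have ho : 0 < onesFrom n ω k :=
    card_pos.mpr ⟨⟨n - 1, Nat.sub_lt hn one_pos⟩, mem_filter.mpr ⟨mem_univ _, (by omega : k ≤ n - 1), h1⟩⟩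
  have hdepth : depth (diag n ω) = zerosBefore n ω k + onesFrom n ω k - 1 := by
    refine le_antisymm (depth_diag_le n ω fun m hm => ?_) (le_depth_diag n ω hkn.le hz ho)
    have := zerosBefore_add_onesFrom n ω hm
    have := zerosBefore_add_onesFrom n ω hkn.le
    have := hmax ▸ le_sup' (walk n ω) (mem_Icc.mpr ⟨m.zero_le, hm⟩)
    omega
  rw [hdepth, hmax]
  have := zerosBefore_add_onesFrom n ω hkn.le
  omega
end

section
/- For p = 1/2, the law μ_n of the stabilization time T_n on {0,1}^n with i.i.d. Bernoulli(1/2) bits satisfies μ_n = ((n+1)/2^n)·δ_0 + Σ_{r=0}^{n−2} ((n−r−1)/2^{n−r})·μ̃_{r+2}, where μ̃_m is the law of the stabilization time on strings of length m conditioned to start with 0 and end with 1 (with the middle m−2 bits i.i.d. Bernoulli(1/2)). -/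
open Finset

/-- The Bernoulli(p) weight of a string. -/
def weight (p : ℝ) (n : ℕ) (ω : Fin n → Bool) : ℝ :=
  ∏ i, (if ω i then p else 1 - p)

/-- The string `0 x 1` of length `r + 2` obtained by surrounding `x` with a
leading 0 and a trailing 1. -/
def special (r : ℕ) (x : Fin r → Bool) : Fin (r + 2) → Bool :=
  fun i =>
    if _h0 : i.val = 0 then false
    else if h : i.val ≤ r then x ⟨i.val - 1, by omega⟩
    else true

/-!
With `p = 1/2` every string has weight `2⁻ⁿ`, so the identity is a count. The stable strings
are exactly `1^j 0^(n-j)`, `0 ≤ j ≤ n`, all with stabilization time `0`. Every unstable string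
factors uniquely as `1^a 0 x 1 0^b`: `a` is the position of the first `0` and `a + r + 1`, with
`r = |x|`, that of the last `1`. A leading block of ones and a trailing block of zeros never move,
so such a string has the stabilization time of `0 x 1`, and for fixed `r` there are `n - r - 1`
choices of `a`.
-/

def evolveSeq (f : ℕ → Bool) : ℕ → Bool := fun k =>
  (f k && !(decide (0 < k) && !f (k - 1))) || (!f k && f (k + 1))

def prependOnes (a : ℕ) (f : ℕ → Bool) : ℕ → Bool := fun k => if k < a then true else f (k - a)

/-- At `k = a` the neighbouring `1` on the left blocks nothing, just as the missing left
neighbour of `f 0` does. -/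
lemma evolveSeq_prependOnes (a : ℕ) (f : ℕ → Bool) :
    evolveSeq (prependOnes a f) = prependOnes a (evolveSeq f) := by
  funext k
  simp only [evolveSeq, prependOnes]
  rcases lt_trichotomy k a with hk | rfl | hk
  · by_cases h0 : 0 < k <;> simp [hk, h0, show k - 1 < a by omega]
  · rcases Nat.eq_zero_or_pos k with rfl | h0
    · simp
    · simp [h0, show k - 1 < k by omega]
  · simp [show ¬ k < a by omega, show ¬ k + 1 < a by omega, show ¬ k - 1 < a by omega,
      show 0 < k by omega, show 0 < k - a by omega, show k + 1 - a = k - a + 1 by omega,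
      show k - 1 - a = k - a - 1 by omega]

lemma iterate_evolveSeq_prependOnes (a m : ℕ) (f : ℕ → Bool) :
    evolveSeq^[m] (prependOnes a f) = prependOnes a (evolveSeq^[m] f) :=
  ((Function.Semiconj.iterate_right (fun g => (evolveSeq_prependOnes a g).symm) m) f).symm

lemma antitone_prependOnes_iff {a : ℕ} {f : ℕ → Bool} :
    Antitone (prependOnes a f) ↔ Antitone f := by
  refine ⟨fun h i j hij => ?_, fun h => antitone_nat_of_succ_le fun k => ?_⟩
  · simpa [prependOnes] using h (show i + a ≤ j + a by omega)
  · unfold prependOnes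
    split_ifs
    · exact le_rfl
    · omega
    · exact Bool.le_true _
    · exact h (by omega)

lemma bit_of_lt {n k : ℕ} (ω : Fin n → Bool) (h : k < n) : bit n ω k = ω ⟨k, h⟩ := dif_pos h

lemma bit_of_le {n k : ℕ} (ω : Fin n → Bool) (h : n ≤ k) : bit n ω k = false :=
  dif_neg (by omega)

lemma bit_injective (n : ℕ) : Function.Injective (bit n) := fun ω ω' h => by
  funext i
  simpa [bit_of_lt _ i.isLt] using congrFun h i

lemma bit_evolve_s11 (n : ℕ) (ω : Fin n → Bool) : bit n (evolve n ω) = evolveSeq (bit n ω) := by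
  funext k
  by_cases hk : k < n
  · rw [bit_of_lt _ hk]; rfl
  · simp [bit_of_le _ (not_lt.1 hk), evolveSeq, bit_of_le ω (show n ≤ k + 1 by omega)]

lemma bit_iterate_evolve (n m : ℕ) (ω : Fin n → Bool) :
    bit n ((evolve n)^[m] ω) = evolveSeq^[m] (bit n ω) :=
  (Function.Semiconj.iterate_right (bit_evolve_s11 n) m) ω

lemma isStable_iff_antitone {n : ℕ} {ω : Fin n → Bool} : IsStable n ω ↔ Antitone (bit n ω) := by
  refine ⟨fun h => antitone_nat_of_succ_le fun k => ?_, fun h k ⟨hk, hk1⟩ => ?_⟩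
  · rw [Bool.le_iff_imp]
    intro h1
    by_contra h0
    exact h k ⟨by simpa using h0, h1⟩
  · simpa [hk, hk1, Bool.le_iff_imp] using h k.le_succ

lemma stabTime_eq_sInf (n : ℕ) (ω : Fin n → Bool) :
    stabTime n ω = sInf {m | Antitone (evolveSeq^[m] (bit n ω))} := by
  simp only [stabTime, isStable_iff_antitone, bit_iterate_evolve]

def ones (n j : ℕ) : Fin n → Bool := fun i => decide (i.val < j)

lemma bit_ones {n j : ℕ} (h : j ≤ n) : bit n (ones n j) = fun k => decide (k < j) := by
  funext k
  by_cases hk : k < n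
  · rw [bit_of_lt _ hk]; rfl
  · simp [bit_of_le _ (not_lt.1 hk)]; omega

lemma isStable_ones {n j : ℕ} (h : j ≤ n) : IsStable n (ones n j) := by
  rw [isStable_iff_antitone, bit_ones h]
  intro k l hkl
  simp only [Bool.le_iff_imp, decide_eq_true_eq]
  omega

lemma eq_ones_of_isStable {n : ℕ} {ω : Fin n → Bool} (hω : IsStable n ω) :
    ∃ j ≤ n, ω = ones n j := by
  rw [isStable_iff_antitone] at hω
  have hzero : ∃ i, bit n ω i = false := ⟨n, bit_of_le ω le_rfl⟩
  have hjn : Nat.find hzero ≤ n := Nat.find_min' hzero (bit_of_le ω le_rfl)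
  refine ⟨Nat.find hzero, hjn, bit_injective n ?_⟩
  rw [bit_ones hjn]
  funext k
  rcases lt_or_ge k (Nat.find hzero) with hk | hk
  · simpa [hk] using Nat.find_min hzero hk
  · have hle := hω hk
    rw [Nat.find_spec hzero] at hle
    simpa [not_lt.2 hk, Bool.le_iff_imp] using hle

lemma stabTime_eq_zero_of_isStable {n : ℕ} {ω : Fin n → Bool} (h : IsStable n ω) :
    stabTime n ω = 0 :=
  Nat.sInf_eq_zero.2 (Or.inl h)

lemma card_filter_isStable (n : ℕ) [DecidablePred (IsStable n)] :
    #{ω : Fin n → Bool | IsStable n ω} = n + 1 := by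
  rw [← card_range (n + 1)]
  symm
  refine card_bij (fun j _ => ones n j) (fun j hj => ?_) (fun j hj j' hj' h => ?_) (fun ω hω => ?_)
  · simpa using isStable_ones (Nat.lt_succ_iff.1 (mem_range.1 hj))
  · have := congrFun (congrArg (bit n) h) (min j j')
    simp only [mem_range] at hj hj'
    simp only [bit_ones (Nat.lt_succ_iff.1 hj), bit_ones (Nat.lt_succ_iff.1 hj'),
      decide_eq_decide] at this
    omega
  · obtain ⟨j, hj, rfl⟩ := eq_ones_of_isStable (mem_filter.1 hω).2
    exact ⟨j, mem_range.2 (Nat.lt_succ_of_le hj), rfl⟩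

/-- The string `1^a w 0^(n-a-m)`; the trailing zeros come from the `false` padding of `bit`. -/
def pad (n a : ℕ) {m : ℕ} (w : Fin m → Bool) : Fin n → Bool := fun i => prependOnes a (bit m w) i

lemma bit_pad {n a m : ℕ} (w : Fin m → Bool) (h : a + m ≤ n) :
    bit n (pad n a w) = prependOnes a (bit m w) := by
  funext k
  by_cases hk : k < n
  · rw [bit_of_lt _ hk]; rfl
  · rw [bit_of_le _ (not_lt.1 hk), prependOnes, if_neg (by omega), bit_of_le _ (by omega)]

lemma isStable_pad_iff {n a m : ℕ} (w : Fin m → Bool) (h : a + m ≤ n) :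
    IsStable n (pad n a w) ↔ IsStable m w := by
  rw [isStable_iff_antitone, isStable_iff_antitone, bit_pad w h, antitone_prependOnes_iff]

lemma stabTime_pad {n a m : ℕ} (w : Fin m → Bool) (h : a + m ≤ n) :
    stabTime n (pad n a w) = stabTime m w := by
  simp only [stabTime_eq_sInf, bit_pad w h, iterate_evolveSeq_prependOnes,
    antitone_prependOnes_iff]

lemma bit_special (r : ℕ) (x : Fin r → Bool) (k : ℕ) :
    bit (r + 2) (special r x) k =
      if k = 0 then false else if k ≤ r then bit r x (k - 1) else decide (k = r + 1) := by
  by_cases hk : k < r + 2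
  · rw [bit_of_lt _ hk]
    simp only [special]
    split_ifs
    · rfl
    · rw [bit_of_lt _ (by omega)]
    · exact (decide_eq_true (by omega)).symm
  · rw [bit_of_le _ (by omega)]
    simp [show k ≠ 0 by omega, show ¬ k ≤ r by omega, show k ≠ r + 1 by omega]

lemma not_isStable_special (r : ℕ) (x : Fin r → Bool) : ¬ IsStable (r + 2) (special r x) := by
  rw [isStable_iff_antitone]
  intro h
  simpa [bit_special, Bool.le_iff_imp] using h (Nat.zero_le (r + 1))

section PaddedSpecial

variable {a r : ℕ} {x : Fin r → Bool} {k : ℕ}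

lemma le_of_prependOnes_special_eq_false
    (h : prependOnes a (bit (r + 2) (special r x)) k = false) : a ≤ k := by
  by_contra hk
  simp [prependOnes, show k < a by omega] at h

lemma le_of_prependOnes_special_eq_true
    (h : prependOnes a (bit (r + 2) (special r x)) k = true) : k ≤ a + r + 1 := by
  by_contra hk
  simp [prependOnes, bit_special, show ¬ k < a by omega, show k - a ≠ 0 by omega,
    show ¬ k - a ≤ r by omega, show k - a ≠ r + 1 by omega] at h

lemma prependOnes_special_self : prependOnes a (bit (r + 2) (special r x)) a = false := by
  simp [prependOnes, bit_special]

lemma prependOnes_special_last :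
    prependOnes a (bit (r + 2) (special r x)) (a + r + 1) = true := by
  simp [prependOnes, bit_special, show a + r + 1 - a = r + 1 by omega]

lemma prependOnes_special_middle (hk : k < r) :
    prependOnes a (bit (r + 2) (special r x)) (a + 1 + k) = bit r x k := by
  simp [prependOnes, bit_special, show ¬ a + 1 + k < a by omega,
    show a + 1 + k - a = k + 1 by omega, show k + 1 ≤ r by omega]

end PaddedSpecial

lemma prependOnes_special_inj {a a' r r' : ℕ} {x : Fin r → Bool} {x' : Fin r' → Bool}
    (h : prependOnes a (bit (r + 2) (special r x)) =
      prependOnes a' (bit (r' + 2) (special r' x'))) :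
    a = a' ∧ r = r' := by
  have h₁ := congrFun h a
  have h₂ := congrFun h a'
  have h₃ := congrFun h (a + r + 1)
  have h₄ := congrFun h (a' + r' + 1)
  rw [prependOnes_special_self] at h₁ h₂
  rw [prependOnes_special_last] at h₃ h₄
  have := le_of_prependOnes_special_eq_false h₁.symm
  have := le_of_prependOnes_special_eq_false h₂
  have := le_of_prependOnes_special_eq_true h₃.symm
  have := le_of_prependOnes_special_eq_true h₄
  omega

lemma prependOnes_special_injective (a r : ℕ) :
    Function.Injective fun x : Fin r → Bool => prependOnes a (bit (r + 2) (special r x)) := by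
  intro x x' h
  refine bit_injective r (funext fun k => ?_)
  by_cases hk : k < r
  · simpa [prependOnes_special_middle hk] using congrFun h (a + 1 + k)
  · rw [bit_of_le x (not_lt.1 hk), bit_of_le x' (not_lt.1 hk)]

lemma exists_eq_pad_special_of_not_isStable {n : ℕ} {ω : Fin n → Bool} (hω : ¬ IsStable n ω) :
    ∃ r a, ∃ x : Fin r → Bool, a + (r + 2) ≤ n ∧ pad n a (special r x) = ω := by
  obtain ⟨k, hk, hk₁⟩ : ∃ k, bit n ω k = false ∧ bit n ω (k + 1) = true := by
    simpa [IsStable] using hω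
  have hkn : k + 1 < n := by
    by_contra h
    simp [bit_of_le ω (not_lt.1 h)] at hk₁
  have hzero : ∃ i, bit n ω i = false := ⟨k, hk⟩
  set a := Nat.find hzero
  set j := Nat.findGreatest (fun i => bit n ω i = true) n
  have hak : a ≤ k := Nat.find_min' hzero hk
  have hkj : k + 1 ≤ j := Nat.le_findGreatest hkn.le hk₁
  have hj : bit n ω j = true := Nat.findGreatest_spec (P := fun i => bit n ω i = true) hkn.le hk₁
  have hjn : j < n := by
    by_contra h
    simp [bit_of_le ω (not_lt.1 h)] at hj
  have hhead : ∀ i < a, bit n ω i = true := fun i hi => by simpa using Nat.find_min hzero hi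
  have htail : ∀ i, j < i → bit n ω i = false := fun i hi => by
    rcases lt_or_ge i n with hin | hin
    · simpa using Nat.findGreatest_is_greatest hi hin.le
    · exact bit_of_le ω hin
  refine ⟨j - a - 1, a, fun i => bit n ω (a + 1 + i), by omega, bit_injective n ?_⟩
  rw [bit_pad _ (by omega)]
  funext i
  simp only [prependOnes, bit_special]
  split_ifs with h₁ h₂ h₃
  · exact (hhead i h₁).symm
  · rw [show i = a by omega]; exact (Nat.find_spec hzero).symm
  · rw [bit_of_lt _ (by omega)]
    show bit n ω (a + 1 + (i - a - 1)) = bit n ω i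
    congr 1
    omega
  · rcases eq_or_lt_of_le (show j ≤ i by omega) with rfl | hji
    · rw [decide_eq_true (by omega : j - a = j - a - 1 + 1), hj]
    · simpa [show i - a ≠ j - a - 1 + 1 by omega] using (htail i hji).symm

lemma card_filter_stabTime_eq_and_isStable (n t : ℕ) [DecidablePred (IsStable n)] :
    #{ω : Fin n → Bool | stabTime n ω = t ∧ IsStable n ω} = if t = 0 then n + 1 else 0 := by
  split_ifs with ht
  · rw [← card_filter_isStable n]
    congr 1
    ext ω
    simpa [← ht] using stabTime_eq_zero_of_isStable
  · rw [card_eq_zero, filter_eq_empty_iff]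
    rintro ω - ⟨rfl, h⟩
    exact ht (stabTime_eq_zero_of_isStable h)

lemma card_filter_stabTime_eq_and_not_isStable (n t : ℕ) [DecidablePred (IsStable n)] :
    #{ω : Fin n → Bool | stabTime n ω = t ∧ ¬ IsStable n ω} =
      ∑ r ∈ range (n - 1),
        (n - r - 1) * #{x : Fin r → Bool | stabTime (r + 2) (special r x) = t} := by
  have hsigma : ∑ r ∈ range (n - 1),
      (n - r - 1) * #{x : Fin r → Bool | stabTime (r + 2) (special r x) = t} =
      #((range (n - 1)).sigma fun r =>
        range (n - r - 1) ×ˢ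
          ({x | stabTime (r + 2) (special r x) = t} : Finset (Fin r → Bool))) := by
    simp [card_sigma, card_product]
  rw [hsigma]
  symm
  refine card_bij (fun p _ => pad n p.2.1 (special p.1 p.2.2)) ?_ ?_ ?_
  · rintro ⟨r, a, x⟩ hp
    simp only [mem_sigma, mem_product, mem_range, mem_filter, mem_univ, true_and] at hp ⊢
    rw [isStable_pad_iff _ (by omega), stabTime_pad _ (by omega)]
    exact ⟨hp.2.2, not_isStable_special r x⟩
  · rintro ⟨r, a, x⟩ hp ⟨r', a', x'⟩ hp' hpad
    simp only [mem_sigma, mem_product, mem_range] at hp hp'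
    have h := congrArg (bit n) hpad
    dsimp only at h
    rw [bit_pad _ (by omega), bit_pad _ (by omega)] at h
    obtain ⟨rfl, rfl⟩ := prependOnes_special_inj h
    rw [prependOnes_special_injective a r h]
  · intro ω hω
    obtain ⟨ht, hunstable⟩ := (mem_filter.1 hω).2
    obtain ⟨r, a, x, h, rfl⟩ := exists_eq_pad_special_of_not_isStable hunstable
    refine ⟨⟨r, a, x⟩, ?_, rfl⟩
    simp only [mem_sigma, mem_product, mem_range, mem_filter, mem_univ, true_and]
    exact ⟨by omega, by omega, by rwa [stabTime_pad _ h] at ht⟩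

theorem card_filter_stabTime_eq (n t : ℕ) :
    #{ω : Fin n → Bool | stabTime n ω = t} = (if t = 0 then n + 1 else 0) +
      ∑ r ∈ range (n - 1),
        (n - r - 1) * #{x : Fin r → Bool | stabTime (r + 2) (special r x) = t} := by
  classical
  rw [← card_filter_add_card_filter_not (p := IsStable n), filter_filter, filter_filter,
    card_filter_stabTime_eq_and_isStable, card_filter_stabTime_eq_and_not_isStable]

lemma weight_half (n : ℕ) (ω : Fin n → Bool) : weight (1 / 2) n ω = 1 / 2 ^ n := by
  rw [weight, prod_congr rfl fun i _ => show (if ω i then (1 / 2 : ℝ) else 1 - 1 / 2) = 1 / 2 by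
    split_ifs <;> norm_num]
  simp

lemma sum_weight_half_mul_ite {n : ℕ} (p : (Fin n → Bool) → Prop) [DecidablePred p] :
    ∑ ω, weight (1 / 2) n ω * (if p ω then (1 : ℝ) else 0) = #{ω | p ω} / 2 ^ n := by
  simp only [weight_half, ← mul_sum, sum_boole]
  ring

/-- For `p = 1/2` the law `μ_n` of the stabilization time decomposes as
`μ_n = ((n+1)/2^n) δ_0 + Σ_{r=0}^{n-2} ((n-r-1)/2^{n-r}) μ̃_{r+2}`, where
`μ̃_m` is the law of the stabilization time of strings `0 x_1 … x_{m-2} 1`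
with i.i.d. Bernoulli(1/2) middle bits. -/
theorem stmt11 (n : ℕ) (t : ℕ) :
    ∑ ω : Fin n → Bool,
        weight (1 / 2) n ω * (if stabTime n ω = t then (1 : ℝ) else 0)
      = ((n : ℝ) + 1) / 2 ^ n * (if t = 0 then (1 : ℝ) else 0)
        + ∑ r ∈ Finset.range (n - 1),
            (((n : ℝ) - r - 1) / 2 ^ (n - r)) *
              ∑ x : Fin r → Bool,
                weight (1 / 2) r x *
                  (if stabTime (r + 2) (special r x) = t then (1 : ℝ) else 0) := by
  simp only [sum_weight_half_mul_ite]
  rw [card_filter_stabTime_eq, Nat.cast_add, add_div, Nat.cast_sum, sum_div]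
  congr 1
  · split_ifs <;> simp
  · refine sum_congr rfl fun r hr => ?_
    have hrn : r + 1 ≤ n := by have := mem_range.1 hr; omega
    have hpow : (2 : ℝ) ^ n = 2 ^ (n - r) * 2 ^ r := by rw [← pow_add]; congr 1; omega
    rw [Nat.cast_mul, Nat.cast_sub (by omega), Nat.cast_sub (by omega), hpow]
    push_cast
    field_simp
end

section
/- For every λ > 0, the function x ↦ (4√2/(λ√π))·e^{−λ²/2}·sinh(2λx)·x·e^{−2x²} for x > 0 integrates to 1 over (0,∞), i.e., it is a probability density. -/
/-!
The integrand is even in `x`, so the half-line integral is half the integral over `ℝ`.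
Writing `sinh (a x) = (e^{a x} - e^{-a x}) / 2` reduces that to `∫ x e^{-b x² + c x}`, which
completing the square `-b x² + c x = -b (x - c/(2b))² + c²/(4b)` turns into the odd moment
`∫ u e^{-b u²} = 0` plus `c/(2b)` times the Gaussian integral `√(π/b)`.
-/

open Real MeasureTheory

lemma integral_eq_zero_of_odd {f : ℝ → ℝ} (hf : ∀ x, f (-x) = -f x) : ∫ x, f x = 0 := by
  have h := integral_neg_eq_self f volume
  simp only [hf, integral_neg] at h
  linarith

lemma integral_Ioi_of_even {f : ℝ → ℝ} (hf : ∀ x, f (-x) = f x) :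
    ∫ x in Set.Ioi 0, f x = (∫ x, f x) / 2 := by
  have h_abs : ∀ x, f |x| = f x := fun x => by
    rcases abs_choice x with h | h <;> rw [h]
    exact hf x
  have h := integral_comp_abs (f := f)
  simp only [h_abs] at h
  linarith

lemma mul_exp_neg_mul_sq_add_mul {b : ℝ} (hb : b ≠ 0) (c x : ℝ) :
    x * exp (-b * x ^ 2 + c * x) = exp (c ^ 2 / (4 * b)) *
      ((x - c / (2 * b)) * exp (-b * (x - c / (2 * b)) ^ 2)
        + c / (2 * b) * exp (-b * (x - c / (2 * b)) ^ 2)) := by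
  rw [← add_mul, sub_add_cancel, mul_left_comm, ← exp_add]
  congr 2
  field_simp
  ring

lemma integrable_mul_exp_neg_mul_sq_add_mul {b : ℝ} (hb : 0 < b) (c : ℝ) :
    Integrable (fun x : ℝ => x * exp (-b * x ^ 2 + c * x)) := by
  simp_rw [mul_exp_neg_mul_sq_add_mul hb.ne']
  exact (((integrable_mul_exp_neg_mul_sq hb).add
    ((integrable_exp_neg_mul_sq hb).const_mul _)).comp_sub_right _).const_mul _

lemma integral_mul_exp_neg_mul_sq_add_mul {b : ℝ} (hb : 0 < b) (c : ℝ) :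
    ∫ x : ℝ, x * exp (-b * x ^ 2 + c * x)
      = c / (2 * b) * √(π / b) * exp (c ^ 2 / (4 * b)) := by
  have h_odd : ∫ u : ℝ, u * exp (-b * u ^ 2) = 0 :=
    integral_eq_zero_of_odd fun u => by rw [neg_sq]; ring
  simp_rw [mul_exp_neg_mul_sq_add_mul hb.ne']
  rw [integral_const_mul, integral_sub_right_eq_self (fun u => u * exp (-b * u ^ 2)
      + c / (2 * b) * exp (-b * u ^ 2)), integral_add (integrable_mul_exp_neg_mul_sq hb)
      ((integrable_exp_neg_mul_sq hb).const_mul _), integral_const_mul, h_odd,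
    integral_gaussian]
  ring

lemma integral_sinh_mul_mul_exp_neg_mul_sq {b : ℝ} (hb : 0 < b) (a : ℝ) :
    ∫ x : ℝ, sinh (a * x) * x * exp (-b * x ^ 2)
      = a / (2 * b) * √(π / b) * exp (a ^ 2 / (4 * b)) := by
  have h_split : ∀ x : ℝ, sinh (a * x) * x * exp (-b * x ^ 2)
      = (x * exp (-b * x ^ 2 + a * x) - x * exp (-b * x ^ 2 + -a * x)) / 2 := fun x => by
    rw [sinh_eq, exp_add, exp_add, neg_mul a x]
    ring
  simp_rw [h_split]
  rw [integral_div, integral_sub (integrable_mul_exp_neg_mul_sq_add_mul hb a)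
    (integrable_mul_exp_neg_mul_sq_add_mul hb (-a)), integral_mul_exp_neg_mul_sq_add_mul hb,
    integral_mul_exp_neg_mul_sq_add_mul hb, neg_sq]
  ring

lemma integral_Ioi_sinh_mul_mul_exp_neg_mul_sq {b : ℝ} (hb : 0 < b) (a : ℝ) :
    ∫ x in Set.Ioi 0, sinh (a * x) * x * exp (-b * x ^ 2)
      = a / (4 * b) * √(π / b) * exp (a ^ 2 / (4 * b)) := by
  rw [integral_Ioi_of_even fun x => by simp only [mul_neg, sinh_neg, neg_sq]; ring,
    integral_sinh_mul_mul_exp_neg_mul_sq hb]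
  ring

/-- For every `λ > 0`, the function
`(4√2/(λ√π)) e^{-λ²/2} sinh(2λx) x e^{-2x²}` integrates to 1 over `(0,∞)`. -/
theorem stmt18 (lam : ℝ) (hlam : 0 < lam) :
    ∫ x in Set.Ioi (0 : ℝ),
        4 * Real.sqrt 2 / (lam * Real.sqrt π) * Real.exp (-lam ^ 2 / 2)
          * Real.sinh (2 * lam * x) * x * Real.exp (-2 * x ^ 2) = 1 := by
  simp_rw [mul_assoc _ (sinh _), mul_assoc _ (sinh _ * _)]
  rw [integral_const_mul, integral_Ioi_sinh_mul_mul_exp_neg_mul_sq two_pos, sqrt_div' _ zero_le_two,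
    show (2 * lam) ^ 2 / (4 * 2) = lam ^ 2 / 2 by ring, neg_div, exp_neg]
  field_simp [hlam.ne']
end
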